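/- Let $K:\mathbb{Z}^n\times\mathbb{Z}^n\to\mathbb{C}$ satisfy $\sum_k \big(\sum_m |K(k,m)|^{p_2}\big)^{r/p_2} < \infty$ for some $0<r\le 1$ and $1\le p_2<\infty$. Then the operator $A:\ell^{p_1}(\mathbb{Z}^n)\to\ell^{p_2}(\mathbb{Z}^n)$ defined by $(Af)(m) = \sum_k f(k) K(k,m)$ is $r$-nuclear, for any $1\le p_1<\infty$. -/

import Mathlib

/-!
With `g k = K(k, ·) ∈ ℓ^{p₂}` the rows of the kernel, `A = ∑ₖ δₖ^* ⊗ g k` is a sum of rank-one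
operators, where `δₖ^*` is evaluation at `k`, of norm at most `1`. Since
`‖g k‖ ^ r = (∑ₘ |K(k, m)| ^ p₂) ^ (r / p₂)` is summable and `r ≤ 1`, also `∑ₖ ‖g k‖ < ∞`, so the
series converges in operator norm; pairing `g k` with `h k = δₖ ∈ ℓ^{p₁'}` of norm `1` is then an
`r`-nuclear decomposition.
-/

open scoped ENNReal

/-- An operator `A : ℓ^{p₁}(ι) → ℓ^{p₂}(ι)` is `r`-nuclear (`0 < r ≤ 1`),
where `p₁'` is the conjugate exponent of `p₁`, if it admits a decomposition
`A f = ∑_j g_j ⟨h_j, f⟩` with `g_j ∈ ℓ^{p₂}`, `h_j ∈ ℓ^{p₁'}` and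
`∑_j ‖g_j‖^r ‖h_j‖^r < ∞`. -/
def IsRNuclear {ι : Type*} (p₁ p₁' p₂ : ℝ≥0∞) [Fact (1 ≤ p₁)] [Fact (1 ≤ p₁')]
    [Fact (1 ≤ p₂)] (r : ℝ)
    (A : lp (fun _ : ι => ℂ) p₁ →L[ℂ] lp (fun _ : ι => ℂ) p₂) : Prop :=
  ∃ (g : ℕ → lp (fun _ : ι => ℂ) p₂) (h : ℕ → lp (fun _ : ι => ℂ) p₁'),
    (∀ (f : lp (fun _ : ι => ℂ) p₁) (m : ι),
      (A f : ι → ℂ) m = ∑' j : ℕ, g j m * ∑' k : ι, h j k * f k) ∧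
    Summable (fun j : ℕ => ‖g j‖ ^ r * ‖h j‖ ^ r)

theorem Summable.of_norm_rpow_of_le_one {ι E : Type*} [NormedAddCommGroup E] {f : ι → E}
    {r : ℝ} (hr0 : 0 < r) (hr1 : r ≤ 1) (h : Summable fun i => ‖f i‖ ^ r) :
    Summable fun i => ‖f i‖ := by
  have hr : Memℓp f (ENNReal.ofReal r) := memℓp_gen (by simpa [hr0.le] using h)
  simpa using (hr.of_exponent_ge (p := 1) (by simpa using hr1)).summable (by simp)

theorem Function.extend_zero_map₂ {α β γ δ ε : Type*} [Zero γ] [Zero δ] [Zero ε]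
    {e : α → β} (he : Function.Injective e) (g : α → γ) (h : α → δ) (F : γ → δ → ε)
    (hF : F 0 0 = 0) :
    (fun b => F (Function.extend e g 0 b) (Function.extend e h 0 b)) =
      Function.extend e (fun a => F (g a) (h a)) 0 := by
  funext b
  by_cases hb : ∃ a, e a = b
  · obtain ⟨a, rfl⟩ := hb
    simp only [he.extend_apply]
  · simp only [Function.extend_apply' _ _ _ hb, Pi.zero_apply, hF]

theorem IsRNuclear.of_countable {ι κ : Type*} [Countable κ] {p₁ p₁' p₂ : ℝ≥0∞}
    [Fact (1 ≤ p₁)] [Fact (1 ≤ p₁')] [Fact (1 ≤ p₂)] {r : ℝ} (hr : r ≠ 0)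
    {A : lp (fun _ : ι => ℂ) p₁ →L[ℂ] lp (fun _ : ι => ℂ) p₂}
    (g : κ → lp (fun _ : ι => ℂ) p₂) (h : κ → lp (fun _ : ι => ℂ) p₁')
    (hA : ∀ f m, (A f : ι → ℂ) m = ∑' j, g j m * ∑' k, h j k * f k)
    (hs : Summable fun j => ‖g j‖ ^ r * ‖h j‖ ^ r) :
    IsRNuclear p₁ p₁' p₂ r A := by
  obtain ⟨e, he⟩ := Countable.exists_injective_nat κ
  refine ⟨Function.extend e g 0, Function.extend e h 0, fun f m => ?_, ?_⟩
  · rw [hA, Function.extend_zero_map₂ he g h (fun x y => x m * ∑' k, y k * f k) (by simp),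
      tsum_extend_zero he]
  · rw [Function.extend_zero_map₂ he g h (fun x y => ‖x‖ ^ r * ‖y‖ ^ r) (by simp [hr])]
    exact (summable_extend_zero he).2 hs

namespace lp

variable {ι : Type*} {p₁ p₂ : ℝ≥0∞} [Fact (1 ≤ p₁)] [Fact (1 ≤ p₂)]

theorem norm_evalCLM_le (𝕜 : Type*) [NontriviallyNormedField 𝕜] (E : ι → Type*)
    [∀ i, NormedAddCommGroup (E i)] [∀ i, NormedSpace 𝕜 (E i)] (p : ℝ≥0∞) [Fact (1 ≤ p)]
    (k : ι) : ‖evalCLM 𝕜 E p k‖ ≤ 1 :=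
  LinearMap.mkContinuous_norm_le _ zero_le_one _

variable (p₁) in
noncomputable def rowOperator (g : ι → lp (fun _ : ι => ℂ) p₂) :
    lp (fun _ : ι => ℂ) p₁ →L[ℂ] lp (fun _ : ι => ℂ) p₂ :=
  ∑' k, (evalCLM ℂ (fun _ : ι => ℂ) p₁ k).smulRight (g k)

theorem coe_rowOperator_apply {g : ι → lp (fun _ : ι => ℂ) p₂}
    (hg : Summable fun k => ‖g k‖) (f : lp (fun _ : ι => ℂ) p₁) (m : ι) :
    (rowOperator p₁ g f : ι → ℂ) m = ∑' k, f k * g k m := by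
  set T := fun k => (evalCLM ℂ (fun _ : ι => ℂ) p₁ k).smulRight (g k)
  have hT : Summable T := by
    refine Summable.of_norm_bounded hg fun k => ?_
    rw [ContinuousLinearMap.norm_smulRight_apply]
    exact mul_le_of_le_one_left (norm_nonneg _) (norm_evalCLM_le ℂ _ p₁ k)
  have hTf : Summable fun k => T k f := hT.map (ContinuousLinearMap.apply ℂ _ f) (by fun_prop)
  have h_apply : rowOperator p₁ g f = ∑' k, T k f :=
    ContinuousLinearMap.map_tsum (ContinuousLinearMap.apply ℂ _ f) hT
  have h_eval : ((∑' k, T k f : lp (fun _ : ι => ℂ) p₂) : ι → ℂ) m = ∑' k, (T k f : ι → ℂ) m :=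
    (evalCLM ℂ (fun _ : ι => ℂ) p₂ m).map_tsum hTf
  rw [h_apply, h_eval]
  rfl

theorem isRNuclear_rowOperator [Countable ι] (p₁' : ℝ≥0∞) [Fact (1 ≤ p₁')] {r : ℝ}
    (hr0 : 0 < r) (hr1 : r ≤ 1) {g : ι → lp (fun _ : ι => ℂ) p₂}
    (hg : Summable fun k => ‖g k‖ ^ r) :
    IsRNuclear p₁ p₁' p₂ r (rowOperator p₁ g) := by
  classical
  have hg1 : Summable fun k => ‖g k‖ := hg.of_norm_rpow_of_le_one hr0 hr1
  refine IsRNuclear.of_countable hr0.ne' g (fun k => lp.single p₁' k 1) (fun f m => ?_)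
    (by simpa [lp.norm_single (one_pos.trans_le Fact.out)] using hg)
  rw [coe_rowOperator_apply hg1 f m]
  refine tsum_congr fun k => ?_
  rw [tsum_eq_single k fun j hj => by rw [lp.single_apply_ne _ _ _ hj, zero_mul],
    lp.single_apply_self, one_mul, mul_comm]

end lp

theorem stmt11_general {n : ℕ} (p₁ p₁' p₂ : ℝ≥0∞) [Fact (1 ≤ p₁)] [Fact (1 ≤ p₁')]
    [Fact (1 ≤ p₂)] (hp₂ : p₂ ≠ ⊤)
    (r : ℝ) (hr0 : 0 < r) (hr1 : r ≤ 1)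
    (K : (Fin n → ℤ) → (Fin n → ℤ) → ℂ)
    (hrow : ∀ k, Summable fun m => ‖K k m‖ ^ p₂.toReal)
    (hK : Summable fun k => (∑' m, ‖K k m‖ ^ p₂.toReal) ^ (r / p₂.toReal)) :
    ∃ A : lp (fun _ : Fin n → ℤ => ℂ) p₁ →L[ℂ] lp (fun _ : Fin n → ℤ => ℂ) p₂,
      (∀ (f : lp (fun _ : Fin n → ℤ => ℂ) p₁) (m : Fin n → ℤ),
        (A f : (Fin n → ℤ) → ℂ) m = ∑' k, f k * K k m) ∧
      IsRNuclear p₁ p₁' p₂ r A := by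
  have hp₂pos : 0 < p₂.toReal := ENNReal.toReal_pos (one_pos.trans_le Fact.out).ne' hp₂
  let row : (Fin n → ℤ) → lp (fun _ : Fin n → ℤ => ℂ) p₂ := fun k => ⟨K k, memℓp_gen (hrow k)⟩
  have norm_row_rpow : ∀ k, ‖row k‖ ^ r = (∑' m, ‖K k m‖ ^ p₂.toReal) ^ (r / p₂.toReal) := by
    intro k
    rw [← show ‖row k‖ ^ p₂.toReal = ∑' m, ‖K k m‖ ^ p₂.toReal from
      lp.norm_rpow_eq_tsum hp₂pos (row k), ← Real.rpow_mul (norm_nonneg _),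
      mul_div_cancel₀ _ hp₂pos.ne']
  have hsum : Summable fun k => ‖row k‖ ^ r := by simpa only [norm_row_rpow] using hK
  exact ⟨lp.rowOperator p₁ row,
    lp.coe_rowOperator_apply (hsum.of_norm_rpow_of_le_one hr0 hr1),
    lp.isRNuclear_rowOperator p₁' hr0 hr1 hsum⟩

/-- Let `K : ℤⁿ × ℤⁿ → ℂ` satisfy
`∑_k (∑_m |K(k,m)|^{p₂})^{r/p₂} < ∞` for some `0 < r ≤ 1` and `1 ≤ p₂ < ∞`.
Then the operator `(A f)(m) = ∑_k f(k) K(k,m)` from `ℓ^{p₁}(ℤⁿ)` to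
`ℓ^{p₂}(ℤⁿ)` is `r`-nuclear, for any `1 ≤ p₁ < ∞`. -/
theorem stmt11 {n : ℕ} (p₁ p₁' p₂ : ℝ≥0∞) [Fact (1 ≤ p₁)] [Fact (1 ≤ p₁')]
    [Fact (1 ≤ p₂)] (hp₁ : p₁ ≠ ⊤) (hp₂ : p₂ ≠ ⊤)
    (hconj : 1 / p₁ + 1 / p₁' = 1)
    (r : ℝ) (hr0 : 0 < r) (hr1 : r ≤ 1)
    (K : (Fin n → ℤ) → (Fin n → ℤ) → ℂ)
    (hrow : ∀ k, Summable fun m => ‖K k m‖ ^ p₂.toReal)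
    (hK : Summable fun k => (∑' m, ‖K k m‖ ^ p₂.toReal) ^ (r / p₂.toReal)) :
    ∃ A : lp (fun _ : Fin n → ℤ => ℂ) p₁ →L[ℂ] lp (fun _ : Fin n → ℤ => ℂ) p₂,
      (∀ (f : lp (fun _ : Fin n → ℤ => ℂ) p₁) (m : Fin n → ℤ),
        (A f : (Fin n → ℤ) → ℂ) m = ∑' k, f k * K k m) ∧
      IsRNuclear p₁ p₁' p₂ r A :=
  stmt11_general p₁ p₁' p₂ hp₂ r hr0 hr1 K hrow hK
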